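/- Let c^k_{ij} be structure constants of a real Lie algebra, Ω(f,g)(x) := Σ x_k c^k_{ij} ∂_i f ∂_j g the Lie–Poisson bivector on ℝ^n, A(f)(x) := Σ_i x_i ∂_i f the Euler vector field, and let ξ ∈ ℝ^n be a constant vector satisfying the one-cocycle condition Σ_ν ξ_ν c^ν_{ij} = 0 for all i,j. Set E(f) := Σ_i ξ_i ∂_i f and Λ(f,g) := Ω(f,g) + E(f)·A(g) − A(f)·E(g). Then the bracket {f,g} := Λ(f,g) + f·E(g) − g·E(f) is antisymmetric and satisfies the Jacobi identity for all smooth f,g,h : ℝ^n → ℝ; i.e. (Ω + E∧A, E) is a linear Jacobi structure on ℝ^n. -/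

import Mathlib

open scoped ContDiff

/-- The `i`-th partial derivative of `f : ℝ^n → ℝ`. -/
noncomputable def pd {n : ℕ} (i : Fin n) (f : (Fin n → ℝ) → ℝ) : (Fin n → ℝ) → ℝ :=
  fun x => fderiv ℝ f x (Pi.single i 1)

/-- The Lie–Poisson bivector associated to structure constants `c`. -/
noncomputable def liePoisson {n : ℕ} (c : Fin n → Fin n → Fin n → ℝ)
    (f g : (Fin n → ℝ) → ℝ) : (Fin n → ℝ) → ℝ :=
  fun x => ∑ k : Fin n, ∑ i : Fin n, ∑ j : Fin n, x k * c k i j * pd i f x * pd j g x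

/-- The Euler (dilatation) vector field `A(f)(x) = ∑ x_i ∂_i f(x)`. -/
noncomputable def eulerField {n : ℕ} (f : (Fin n → ℝ) → ℝ) : (Fin n → ℝ) → ℝ :=
  fun x => ∑ i : Fin n, x i * pd i f x

/-- The constant vector field `E(f)(x) = ∑ ξ_i ∂_i f(x)`. -/
noncomputable def constVecField {n : ℕ} (ξ : Fin n → ℝ)
    (f : (Fin n → ℝ) → ℝ) : (Fin n → ℝ) → ℝ :=
  fun x => ∑ i : Fin n, ξ i * pd i f x

/-- The bivector `Λ := Ω + E ∧ A` of the linear Jacobi construction. -/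
noncomputable def jacLambda {n : ℕ} (c : Fin n → Fin n → Fin n → ℝ)
    (ξ : Fin n → ℝ) (f g : (Fin n → ℝ) → ℝ) : (Fin n → ℝ) → ℝ :=
  fun x => liePoisson c f g x + constVecField ξ f x * eulerField g x -
    eulerField f x * constVecField ξ g x

/-- The Jacobi bracket `{f,g} := Λ(f,g) + f·E(g) - g·E(f)`. -/
noncomputable def jacBr {n : ℕ} (c : Fin n → Fin n → Fin n → ℝ)
    (ξ : Fin n → ℝ) (f g : (Fin n → ℝ) → ℝ) : (Fin n → ℝ) → ℝ :=
  fun x => jacLambda c ξ f g x + f x * constVecField ξ g x - g x * constVecField ξ f x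


/-!
At a point `x` the bracket is `{f, k}(x) = X_f ⬝ᵥ ∇k(x) - k(x) E(f)(x)`, where the Hamiltonian
vector `X_f = Λ(df, ·) + f ξ` depends only on the 1-jet of `f` at `x`. Hence `{f, {g, h}}(x)` is
the derivative of `{g, h}` at `x` in the direction `X_f`, and that derivative in a direction `v` is
`v ⬝ᵥ [dg, dh] + D²h(v, X_g) - D²g(v, X_h)`: differentiating the coefficients of `E ∧ A` produces
exactly the terms that differentiating `f E(g) - g E(f)` removes again. In the cyclic sum the
Hessian terms cancel by the symmetry of second derivatives, and the remaining first-order terms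
by the Jacobi identity of `[·, ·]` and the cocycle condition `ξ ⬝ᵥ [u, v] = 0`.
-/

open Finset

namespace LinearJacobi

variable {n : ℕ}

section LieBracket

variable {c : Fin n → Fin n → Fin n → ℝ}

variable (c) in
def lieBr (u v : Fin n → ℝ) : Fin n → ℝ := fun k => ∑ i, ∑ j, c k i j * u i * v j

theorem lieBr_swap (hanti : ∀ k i j, c k i j = -c k j i) (u v : Fin n → ℝ) :
    lieBr c u v = -lieBr c v u := by
  funext k
  simp only [lieBr, Pi.neg_apply, ← sum_neg_distrib]
  rw [Finset.sum_comm]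
  exact sum_congr rfl fun j _ => sum_congr rfl fun i _ => by rw [hanti k i j]; ring

theorem dotProduct_lieBr_eq_zero {ξ : Fin n → ℝ}
    (hcocycle : ∀ i j : Fin n, ∑ ν : Fin n, ξ ν * c ν i j = 0) (u v : Fin n → ℝ) :
    ξ ⬝ᵥ lieBr c u v = 0 := by
  simp only [dotProduct, lieBr, mul_sum]
  rw [← sum_comm_cycle]
  refine sum_eq_zero fun i _ => sum_eq_zero fun j _ => ?_
  calc ∑ ν, ξ ν * (c ν i j * u i * v j) = (∑ ν, ξ ν * c ν i j) * (u i * v j) := by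
        rw [sum_mul]; exact sum_congr rfl fun _ _ => by ring
    _ = 0 := by rw [hcocycle, zero_mul]

theorem lieBr_lieBr_apply (a b d : Fin n → ℝ) (m : Fin n) :
    lieBr c (lieBr c a b) d m = ∑ i, ∑ j, ∑ k, a i * b j * d k * ∑ ν, c ν i j * c m ν k := by
  calc lieBr c (lieBr c a b) d m
      = ∑ ν, ∑ k, ∑ i, ∑ j, a i * b j * d k * (c ν i j * c m ν k) := by
        simp only [lieBr, mul_sum, sum_mul]
        ac_rfl
    _ = ∑ ν, ∑ i, ∑ j, ∑ k, a i * b j * d k * (c ν i j * c m ν k) :=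
        sum_congr rfl fun ν _ => sum_comm_cycle.symm
    _ = ∑ i, ∑ j, ∑ ν, ∑ k, a i * b j * d k * (c ν i j * c m ν k) := sum_comm_cycle.symm
    _ = ∑ i, ∑ j, ∑ k, a i * b j * d k * ∑ ν, c ν i j * c m ν k := by
        simp only [mul_sum]
        exact sum_congr rfl fun i _ => sum_congr rfl fun j _ => Finset.sum_comm

theorem lieBr_jacobi (hjac : ∀ i j k m : Fin n,
      ∑ ν : Fin n, (c ν i j * c m ν k + c ν j k * c m ν i + c ν k i * c m ν j) = 0)
    (a b d : Fin n → ℝ) :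
    lieBr c (lieBr c a b) d + lieBr c (lieBr c b d) a + lieBr c (lieBr c d a) b = 0 := by
  funext m
  simp only [Pi.add_apply, Pi.zero_apply, lieBr_lieBr_apply]
  rw [sum_comm_cycle (f := fun i j k => b i * d j * a k * ∑ ν, c ν i j * c m ν k),
    ← sum_comm_cycle (f := fun j k i => d i * a j * b k * ∑ ν, c ν i j * c m ν k)]
  simp only [← sum_add_distrib]
  refine sum_eq_zero fun i _ => sum_eq_zero fun j _ => sum_eq_zero fun k _ => ?_
  have hjac' := hjac i j k m
  rw [sum_add_distrib, sum_add_distrib] at hjac'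
  linear_combination a i * b j * d k * hjac'

variable (c) (ξ : Fin n → ℝ) in
def jacLambdaForm (y a b : Fin n → ℝ) : ℝ :=
  y ⬝ᵥ lieBr c a b + (ξ ⬝ᵥ a) * (y ⬝ᵥ b) - (y ⬝ᵥ a) * (ξ ⬝ᵥ b)

variable {ξ : Fin n → ℝ}

theorem jacLambdaForm_swap (hanti : ∀ k i j, c k i j = -c k j i) (y a b : Fin n → ℝ) :
    jacLambdaForm c ξ y a b = -jacLambdaForm c ξ y b a := by
  simp only [jacLambdaForm, lieBr_swap hanti a b, dotProduct_neg]
  ring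

variable (c) (ξ) in
def hamiltonianVec (y : Fin n → ℝ) (f₀ : ℝ) (a : Fin n → ℝ) : Fin n → ℝ :=
  (fun m => ∑ k, ∑ i, y k * c k i m * a i) + (ξ ⬝ᵥ a) • y - (y ⬝ᵥ a) • ξ + f₀ • ξ

theorem hamiltonianVec_dotProduct (y : Fin n → ℝ) (f₀ : ℝ) (a b : Fin n → ℝ) :
    hamiltonianVec c ξ y f₀ a ⬝ᵥ b = jacLambdaForm c ξ y a b + f₀ * (ξ ⬝ᵥ b) := by
  have hlie : (fun m => ∑ k, ∑ i, y k * c k i m * a i) ⬝ᵥ b = y ⬝ᵥ lieBr c a b := by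
    simp only [dotProduct, lieBr, mul_sum, sum_mul]
    rw [← sum_comm_cycle]
    ac_rfl
  simp only [hamiltonianVec, jacLambdaForm, add_dotProduct, sub_dotProduct, smul_dotProduct,
    smul_eq_mul, hlie]

theorem firstOrder_jacobiator_eq_zero (hanti : ∀ k i j, c k i j = -c k j i)
    (hjac : ∀ i j k m : Fin n,
      ∑ ν : Fin n, (c ν i j * c m ν k + c ν j k * c m ν i + c ν k i * c m ν j) = 0)
    (hcocycle : ∀ i j : Fin n, ∑ ν : Fin n, ξ ν * c ν i j = 0)
    (y : Fin n → ℝ) (f₀ g₀ h₀ : ℝ) (a b d : Fin n → ℝ) :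
    (hamiltonianVec c ξ y f₀ a ⬝ᵥ lieBr c b d
        - (hamiltonianVec c ξ y g₀ b ⬝ᵥ d - h₀ * (ξ ⬝ᵥ b)) * (ξ ⬝ᵥ a))
      + (hamiltonianVec c ξ y g₀ b ⬝ᵥ lieBr c d a
        - (hamiltonianVec c ξ y h₀ d ⬝ᵥ a - f₀ * (ξ ⬝ᵥ d)) * (ξ ⬝ᵥ b))
      + (hamiltonianVec c ξ y h₀ d ⬝ᵥ lieBr c a b
        - (hamiltonianVec c ξ y f₀ a ⬝ᵥ b - g₀ * (ξ ⬝ᵥ a)) * (ξ ⬝ᵥ d)) = 0 := by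
  have hJ := congrArg (y ⬝ᵥ ·) (lieBr_jacobi hjac b d a)
  simp only [dotProduct_add, dotProduct_zero] at hJ
  simp only [hamiltonianVec_dotProduct, jacLambdaForm, dotProduct_lieBr_eq_zero hcocycle,
    lieBr_swap hanti a (lieBr c b d), lieBr_swap hanti b (lieBr c d a),
    lieBr_swap hanti d (lieBr c a b), dotProduct_neg]
  linear_combination -hJ

end LieBracket

section Calculus

variable {𝕜 ι E : Type*} [NontriviallyNormedField 𝕜] [NormedAddCommGroup E] [NormedSpace 𝕜 E]
  {x : E}

theorem fderiv_pi_apply {A : E → ι → 𝕜} (hA : DifferentiableAt 𝕜 A x) (v : E) (i : ι) :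
    fderiv 𝕜 (fun y => A y i) x v = fderiv 𝕜 A x v i := by
  rw [fderiv_apply hA]
  rfl

variable [Fintype ι]

@[fun_prop]
theorem _root_.DifferentiableAt.dotProduct {A B : E → ι → 𝕜} (hA : DifferentiableAt 𝕜 A x)
    (hB : DifferentiableAt 𝕜 B x) : DifferentiableAt 𝕜 (fun y => A y ⬝ᵥ B y) x := by
  have := differentiableAt_pi.1 hA
  have := differentiableAt_pi.1 hB
  unfold _root_.dotProduct
  fun_prop

theorem fderiv_dotProduct_apply {A B : E → ι → 𝕜} (hA : DifferentiableAt 𝕜 A x)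
    (hB : DifferentiableAt 𝕜 B x) (v : E) :
    fderiv 𝕜 (fun y => A y ⬝ᵥ B y) x v = fderiv 𝕜 A x v ⬝ᵥ B x + A x ⬝ᵥ fderiv 𝕜 B x v := by
  have := differentiableAt_pi.1 hA
  have := differentiableAt_pi.1 hB
  simp (disch := fun_prop) only [dotProduct, fderiv_fun_sum, fderiv_fun_mul,
    fderiv_pi_apply hA, fderiv_pi_apply hB, _root_.sum_apply, add_apply, smul_apply, smul_eq_mul,
    ← sum_add_distrib]
  exact sum_congr rfl fun i _ => by ring

end Calculus

section BracketCalculus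

variable {E : Type*} [NormedAddCommGroup E] [NormedSpace ℝ E] {x : E}
  (c : Fin n → Fin n → Fin n → ℝ) (ξ : Fin n → ℝ)

@[fun_prop]
theorem differentiableAt_lieBr {A B : E → Fin n → ℝ}
    (hA : DifferentiableAt ℝ A x) (hB : DifferentiableAt ℝ B x) :
    DifferentiableAt ℝ (fun y => lieBr c (A y) (B y)) x := by
  have := differentiableAt_pi.1 hA
  have := differentiableAt_pi.1 hB
  refine differentiableAt_pi.2 fun k => ?_
  unfold LinearJacobi.lieBr
  fun_prop

theorem fderiv_lieBr_apply {A B : E → Fin n → ℝ}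
    (hA : DifferentiableAt ℝ A x) (hB : DifferentiableAt ℝ B x) (v : E) :
    fderiv ℝ (fun y => lieBr c (A y) (B y)) x v
      = lieBr c (fderiv ℝ A x v) (B x) + lieBr c (A x) (fderiv ℝ B x v) := by
  have := differentiableAt_pi.1 hA
  have := differentiableAt_pi.1 hB
  funext k
  rw [← fderiv_pi_apply (differentiableAt_lieBr c hA hB)]
  simp (disch := fun_prop) only [lieBr, fderiv_fun_sum, fderiv_fun_mul, fderiv_const_apply,
    fderiv_pi_apply hA, fderiv_pi_apply hB, _root_.sum_apply,
    add_apply, smul_apply, zero_apply, smul_eq_mul, Pi.add_apply, ← sum_add_distrib]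
  exact sum_congr rfl fun i _ => sum_congr rfl fun j _ => by ring

@[fun_prop]
theorem differentiableAt_jacLambdaForm {Y A B : E → Fin n → ℝ} (hY : DifferentiableAt ℝ Y x) (hA : DifferentiableAt ℝ A x)
    (hB : DifferentiableAt ℝ B x) :
    DifferentiableAt ℝ (fun y => jacLambdaForm c ξ (Y y) (A y) (B y)) x := by
  unfold LinearJacobi.jacLambdaForm
  fun_prop

theorem fderiv_jacLambdaForm_apply {Y A B : E → Fin n → ℝ} (hY : DifferentiableAt ℝ Y x) (hA : DifferentiableAt ℝ A x)
    (hB : DifferentiableAt ℝ B x) (v : E) :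
    fderiv ℝ (fun y => jacLambdaForm c ξ (Y y) (A y) (B y)) x v
      = jacLambdaForm c ξ (fderiv ℝ Y x v) (A x) (B x)
        + jacLambdaForm c ξ (Y x) (fderiv ℝ A x v) (B x)
        + jacLambdaForm c ξ (Y x) (A x) (fderiv ℝ B x v) := by
  unfold jacLambdaForm
  simp (disch := fun_prop) only [fderiv_fun_sub, fderiv_fun_add, fderiv_fun_mul,
    fderiv_dotProduct_apply, fderiv_lieBr_apply, fderiv_const_apply,
    sub_apply, add_apply, smul_apply, zero_apply, smul_eq_mul, dotProduct_add, zero_dotProduct]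
  ring

end BracketCalculus

section Jets

variable {f g h : (Fin n → ℝ) → ℝ} {x : Fin n → ℝ}

noncomputable def grad (f : (Fin n → ℝ) → ℝ) (x : Fin n → ℝ) : Fin n → ℝ := fun i => pd i f x

theorem dotProduct_single_apply {ι R : Type*} [Fintype ι] [DecidableEq ι] [CommSemiring R]
    (L : (ι → R) →ₗ[R] R) (u : ι → R) : u ⬝ᵥ (fun i => L (Pi.single i 1)) = L u := by
  conv_rhs => rw [pi_eq_sum_univ' u]
  simp [dotProduct]

theorem dotProduct_grad (f : (Fin n → ℝ) → ℝ) (x v : Fin n → ℝ) :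
    v ⬝ᵥ grad f x = fderiv ℝ f x v :=
  dotProduct_single_apply (fderiv ℝ f x).toLinearMap v

theorem differentiableAt_grad (hf : DifferentiableAt ℝ (fderiv ℝ f) x) :
    DifferentiableAt ℝ (grad f) x :=
  differentiableAt_pi.2 fun _ => hf.clm_apply (differentiableAt_const _)

theorem dotProduct_fderiv_grad (hf : DifferentiableAt ℝ (fderiv ℝ f) x) (u v : Fin n → ℝ) :
    u ⬝ᵥ fderiv ℝ (grad f) x v = fderiv ℝ (fderiv ℝ f) x v u := by
  have hcoord : fderiv ℝ (grad f) x v = fun i => fderiv ℝ (fderiv ℝ f) x v (Pi.single i 1) := by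
    funext i
    rw [← fderiv_pi_apply (differentiableAt_grad hf)]
    simp [grad, pd, fderiv_clm_apply hf (differentiableAt_const _)]
  rw [hcoord]
  exact dotProduct_single_apply (fderiv ℝ (fderiv ℝ f) x v).toLinearMap u

variable {c : Fin n → Fin n → Fin n → ℝ} {ξ : Fin n → ℝ}

theorem jacBr_apply (f g : (Fin n → ℝ) → ℝ) (x : Fin n → ℝ) :
    jacBr c ξ f g x = jacLambdaForm c ξ x (grad f x) (grad g x)
      + f x * (ξ ⬝ᵥ grad g x) - g x * (ξ ⬝ᵥ grad f x) := by
  simp only [jacBr, jacLambda, liePoisson, eulerField, constVecField, jacLambdaForm, dotProduct,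
    lieBr, grad, mul_sum]
  ac_rfl

theorem jacBr_apply_swap (hanti : ∀ k i j, c k i j = -c k j i) (f g : (Fin n → ℝ) → ℝ)
    (x : Fin n → ℝ) : jacBr c ξ f g x = -jacBr c ξ g f x := by
  rw [jacBr_apply, jacBr_apply, jacLambdaForm_swap hanti]
  ring

theorem jacBr_eq_hamiltonianVec (f k : (Fin n → ℝ) → ℝ) (x : Fin n → ℝ) :
    jacBr c ξ f k x
      = hamiltonianVec c ξ x (f x) (grad f x) ⬝ᵥ grad k x - k x * (ξ ⬝ᵥ grad f x) := by
  rw [hamiltonianVec_dotProduct, jacBr_apply]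

theorem fderiv_jacBr_apply (hanti : ∀ k i j, c k i j = -c k j i)
    (hg : DifferentiableAt ℝ g x) (hg' : DifferentiableAt ℝ (fderiv ℝ g) x)
    (hh : DifferentiableAt ℝ h x) (hh' : DifferentiableAt ℝ (fderiv ℝ h) x) (v : Fin n → ℝ) :
    fderiv ℝ (jacBr c ξ g h) x v
      = v ⬝ᵥ lieBr c (grad g x) (grad h x)
        + fderiv ℝ (fderiv ℝ h) x v (hamiltonianVec c ξ x (g x) (grad g x))
        - fderiv ℝ (fderiv ℝ g) x v (hamiltonianVec c ξ x (h x) (grad h x)) := by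
  have hG := differentiableAt_grad hg'
  have hH := differentiableAt_grad hh'
  rw [funext (jacBr_apply (c := c) (ξ := ξ) g h)]
  simp (disch := fun_prop) only [fderiv_fun_sub, fderiv_fun_add, fderiv_fun_mul,
    fderiv_jacLambdaForm_apply, fderiv_dotProduct_apply, fderiv_fun_id, fderiv_const_apply,
    sub_apply, add_apply, smul_apply, zero_apply, ContinuousLinearMap.id_apply, smul_eq_mul,
    zero_dotProduct, zero_add]
  rw [← dotProduct_fderiv_grad hh', ← dotProduct_fderiv_grad hg', hamiltonianVec_dotProduct,
    hamiltonianVec_dotProduct, jacLambdaForm_swap hanti x (grad h x), ← dotProduct_grad g,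
    ← dotProduct_grad h]
  unfold jacLambdaForm
  ring

theorem jacBr_jacBr_apply (hanti : ∀ k i j, c k i j = -c k j i)
    (hg : DifferentiableAt ℝ g x) (hg' : DifferentiableAt ℝ (fderiv ℝ g) x)
    (hh : DifferentiableAt ℝ h x) (hh' : DifferentiableAt ℝ (fderiv ℝ h) x)
    (f : (Fin n → ℝ) → ℝ) :
    jacBr c ξ f (jacBr c ξ g h) x
      = hamiltonianVec c ξ x (f x) (grad f x) ⬝ᵥ lieBr c (grad g x) (grad h x)
        + fderiv ℝ (fderiv ℝ h) x (hamiltonianVec c ξ x (f x) (grad f x))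
            (hamiltonianVec c ξ x (g x) (grad g x))
        - fderiv ℝ (fderiv ℝ g) x (hamiltonianVec c ξ x (f x) (grad f x))
            (hamiltonianVec c ξ x (h x) (grad h x))
        - (hamiltonianVec c ξ x (g x) (grad g x) ⬝ᵥ grad h x - h x * (ξ ⬝ᵥ grad g x))
          * (ξ ⬝ᵥ grad f x) := by
  rw [jacBr_eq_hamiltonianVec f (jacBr c ξ g h), dotProduct_grad,
    fderiv_jacBr_apply hanti hg hg' hh hh', jacBr_eq_hamiltonianVec g h]

theorem jacBr_jacobi_apply (hanti : ∀ k i j, c k i j = -c k j i)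
    (hjac : ∀ i j k m : Fin n,
      ∑ ν : Fin n, (c ν i j * c m ν k + c ν j k * c m ν i + c ν k i * c m ν j) = 0)
    (hcocycle : ∀ i j : Fin n, ∑ ν : Fin n, ξ ν * c ν i j = 0)
    (hf : ContDiffAt ℝ 2 f x) (hg : ContDiffAt ℝ 2 g x) (hh : ContDiffAt ℝ 2 h x) :
    jacBr c ξ f (jacBr c ξ g h) x + jacBr c ξ g (jacBr c ξ h f) x
      + jacBr c ξ h (jacBr c ξ f g) x = 0 := by
  have d₁ : ∀ k : (Fin n → ℝ) → ℝ, ContDiffAt ℝ 2 k x → DifferentiableAt ℝ k x :=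
    fun k hk => hk.differentiableAt (by norm_num)
  have d₂ : ∀ k : (Fin n → ℝ) → ℝ, ContDiffAt ℝ 2 k x → DifferentiableAt ℝ (fderiv ℝ k) x :=
    fun k hk => (hk.fderiv_right (m := 1) le_rfl).differentiableAt one_ne_zero
  have hsymm : ∀ k : (Fin n → ℝ) → ℝ, ContDiffAt ℝ 2 k x → IsSymmSndFDerivAt ℝ k x :=
    fun k hk => hk.isSymmSndFDerivAt (by simp)
  rw [jacBr_jacBr_apply hanti (d₁ g hg) (d₂ g hg) (d₁ h hh) (d₂ h hh),
    jacBr_jacBr_apply hanti (d₁ h hh) (d₂ h hh) (d₁ f hf) (d₂ f hf),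
    jacBr_jacBr_apply hanti (d₁ f hf) (d₂ f hf) (d₁ g hg) (d₂ g hg)]
  set X := fun k : (Fin n → ℝ) → ℝ => hamiltonianVec c ξ x (k x) (grad k x)
  linear_combination firstOrder_jacobiator_eq_zero hanti hjac hcocycle x (f x) (g x) (h x) (grad f x)
      (grad g x) (grad h x) + hsymm f hf (X g) (X h) + hsymm g hg (X h) (X f)
      + hsymm h hh (X f) (X g)

end Jets

end LinearJacobi

open LinearJacobi in
/-- Let `Ω` be the Lie–Poisson bivector of a real Lie algebra, `A` the Euler
vector field and `E = ∑ ξ_i ∂_i` a constant vector field whose coefficients satisfy the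
one-cocycle condition `∑_ν ξ_ν c^ν_{ij} = 0`.  Then the bracket
`{f,g} := (Ω + E∧A)(f,g) + f·E(g) - g·E(f)` is antisymmetric and satisfies the Jacobi
identity on smooth functions: `(Ω + E∧A, E)` is a linear Jacobi structure on `ℝ^n`. -/
theorem linear_jacobi_structure_from_one_cocycle (n : ℕ)
    (c : Fin n → Fin n → Fin n → ℝ)
    (hanti : ∀ k i j, c k i j = -c k j i)
    (hjac : ∀ i j k m : Fin n,
      ∑ ν : Fin n, (c ν i j * c m ν k + c ν j k * c m ν i + c ν k i * c m ν j) = 0)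
    (ξ : Fin n → ℝ) (hcocycle : ∀ i j : Fin n, ∑ ν : Fin n, ξ ν * c ν i j = 0) :
    (∀ f g : (Fin n → ℝ) → ℝ, ContDiff ℝ ∞ f → ContDiff ℝ ∞ g →
      jacBr c ξ f g = fun x => -(jacBr c ξ g f x)) ∧
    (∀ f g h : (Fin n → ℝ) → ℝ, ContDiff ℝ ∞ f → ContDiff ℝ ∞ g → ContDiff ℝ ∞ h →
      (fun x => jacBr c ξ f (jacBr c ξ g h) x + jacBr c ξ g (jacBr c ξ h f) x +
        jacBr c ξ h (jacBr c ξ f g) x) = 0) := by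
  refine ⟨fun f g _ _ => funext (jacBr_apply_swap hanti f g), fun f g h hf hg hh => ?_⟩
  have hC2 : ∀ k : (Fin n → ℝ) → ℝ, ContDiff ℝ ∞ k → ∀ x, ContDiffAt ℝ 2 k x :=
    fun k hk x => hk.contDiffAt.of_le (by norm_cast)
  funext x
  exact jacBr_jacobi_apply hanti hjac hcocycle (hC2 f hf x) (hC2 g hg x) (hC2 h hh x)
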